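/- For the cycle C_n on n vertices (n ≥ 4), the maximum cardinality of a convexly independent set equals that of the path on n−1 vertices, i.e., β_c(C_n) = 2·⌊(n−1)/3⌋ + ((n−1) mod 3). -/

import Mathlib

/-! On a cycle the neighbours of `x` are `x - 1` and `x + 1`. If one of them, `z`, is missing
from `S`, then the complement of the edge `{x, z}` is P3-convex (both ends have degree two), so
`x` is not in the hull of `S \ {x}`. Hence the convexly independent sets of `C_n` are exactly the
sets with no three cyclically consecutive vertices. For such `S` the translates `Sᶜ + 1`, `Sᶜ`,
`Sᶜ - 1` cover all `n` vertices, so `|Sᶜ| ≥ ⌈n / 3⌉`; the vertices whose index is not divisible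
by `3` attain this bound, and `n - ⌈n / 3⌉ = 2 ⌊(n - 1) / 3⌋ + (n - 1) mod 3`. -/

/-- A set `S` of vertices is P3-convex if every vertex outside `S`
has at most one neighbor in `S`. -/
def P3Convex {V : Type*} (G : SimpleGraph V) (S : Set V) : Prop :=
  ∀ x ∉ S, ({y | y ∈ S ∧ G.Adj x y} : Set V).Subsingleton

/-- The P3-convex hull of `A`: the intersection of all P3-convex sets containing `A`. -/
def p3Hull {V : Type*} (G : SimpleGraph V) (A : Set V) : Set V :=
  ⋂₀ {C : Set V | P3Convex G C ∧ A ⊆ C}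

/-- A set `S` is convexly independent if no `x ∈ S` lies in the hull of `S \ {x}`. -/
def ConvIndep {V : Type*} (G : SimpleGraph V) (S : Set V) : Prop :=
  ∀ x ∈ S, x ∉ p3Hull G (S \ {x})

/-- The maximum cardinality of a convexly independent set. -/
noncomputable def betaC {V : Type*} (G : SimpleGraph V) : ℕ :=
  sSup {n | ∃ S : Set V, ConvIndep G S ∧ S.ncard = n}

open Finset SimpleGraph

section P3Hull

variable {V : Type*} {G : SimpleGraph V}

theorem p3Hull_subset_of_p3Convex {A C : Set V} (hC : P3Convex G C) (hAC : A ⊆ C) :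
    p3Hull G A ⊆ C :=
  Set.sInter_subset_of_mem ⟨hC, hAC⟩

theorem mem_p3Hull_of_adj_of_adj {A : Set V} {x a b : V} (ha : a ∈ A) (hb : b ∈ A) (hab : a ≠ b)
    (hxa : G.Adj x a) (hxb : G.Adj x b) : x ∈ p3Hull G A := by
  refine Set.mem_sInter.2 fun C ⟨hC, hAC⟩ => ?_
  by_contra hx
  exact hab (hC x hx ⟨hAC ha, hxa⟩ ⟨hAC hb, hxb⟩)

theorem p3Convex_compl_pair {x z : V} (h : G.Adj x z) (hx : (G.neighborSet x).encard ≤ 2)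
    (hz : (G.neighborSet z).encard ≤ 2) : P3Convex G {x, z}ᶜ := by
  have hnbrs : ∀ w, ∀ u ∈ ({x, z} : Set V), G.Adj w u → (G.neighborSet w).encard ≤ 2 →
      ({y | y ∈ ({x, z} : Set V)ᶜ ∧ G.Adj w y} : Set V).Subsingleton := by
    intro w u hu hwu hdeg
    have hrest : (G.neighborSet w \ {u}).encard + 1 ≤ 1 + 1 := by
      rw [← mem_neighborSet] at hwu
      rw [Set.encard_sdiff_singleton_add_one hwu, one_add_one_eq_two]
      exact hdeg
    refine (Set.encard_le_one_iff_subsingleton.1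
      ((ENat.add_le_add_iff_right ENat.one_ne_top).1 hrest)).anti ?_
    rintro y ⟨hy, hwy⟩
    exact ⟨hwy, fun hyu => hy (hyu ▸ hu)⟩
  intro w hw
  rcases not_not.1 hw with rfl | rfl
  · exact hnbrs w z (by simp) h hx
  · exact hnbrs w x (by simp) h.symm hz

end P3Hull

section Cycle

variable {n : ℕ}

theorem cycleGraph_adj_sub_one (x : Fin (n + 2)) : (cycleGraph (n + 2)).Adj x (x - 1) := by
  simp [← mem_neighborSet, cycleGraph_neighborSet]

theorem cycleGraph_adj_add_one (x : Fin (n + 2)) : (cycleGraph (n + 2)).Adj x (x + 1) := by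
  simp [← mem_neighborSet, cycleGraph_neighborSet]

theorem Fin.sub_one_ne_add_one (x : Fin (n + 3)) : x - 1 ≠ x + 1 := by
  rw [Ne, sub_eq_iff_eq_add, add_assoc, left_eq_add, Fin.ext_iff]
  simp [Fin.val_add, Nat.mod_eq_of_lt (by omega : 2 < n + 3)]

theorem encard_neighborSet_cycleGraph_le (x : Fin (n + 2)) :
    ((cycleGraph (n + 2)).neighborSet x).encard ≤ 2 := by
  rw [cycleGraph_neighborSet]
  exact (Set.encard_insert_le _ _).trans_eq (by rw [Set.encard_singleton, one_add_one_eq_two])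

theorem convIndep_cycleGraph_iff {S : Set (Fin (n + 3))} :
    ConvIndep (cycleGraph (n + 3)) S ↔ ∀ x ∈ S, x - 1 ∈ S → x + 1 ∉ S := by
  constructor
  · intro hS x hx hsub hadd
    exact hS x hx <| mem_p3Hull_of_adj_of_adj ⟨hsub, (cycleGraph_adj_sub_one x).ne'⟩
      ⟨hadd, (cycleGraph_adj_add_one x).ne'⟩ x.sub_one_ne_add_one
      (cycleGraph_adj_sub_one x) (cycleGraph_adj_add_one x)
  · intro hS x hx hmem
    obtain ⟨z, hxz, hz⟩ : ∃ z, (cycleGraph (n + 3)).Adj x z ∧ z ∉ S := by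
      by_cases hsub : x - 1 ∈ S
      · exact ⟨x + 1, cycleGraph_adj_add_one x, hS x hx hsub⟩
      · exact ⟨x - 1, cycleGraph_adj_sub_one x, hsub⟩
    have hcompl : S \ {x} ⊆ {x, z}ᶜ := by
      rintro y ⟨hy, hyx⟩ (rfl | rfl)
      exacts [hyx rfl, hz hy]
    exact p3Hull_subset_of_p3Convex (p3Convex_compl_pair hxz
      (encard_neighborSet_cycleGraph_le x) (encard_neighborSet_cycleGraph_le z)) hcompl hmem
      (Set.mem_insert x _)

end Cycle

theorem card_le_three_mul_card_compl {α : Type*} [AddGroup α] [Fintype α] [DecidableEq α]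
    (g : α) {S : Finset α} (hS : ∀ x ∈ S, x - g ∈ S → x + g ∉ S) :
    Fintype.card α ≤ 3 * #Sᶜ := by
  have hcover : (univ : Finset α) ⊆ Sᶜ.image (· + g) ∪ Sᶜ ∪ Sᶜ.image (· - g) := by
    intro x _
    simp only [mem_union, mem_image, mem_compl]
    by_cases hx : x ∈ S
    · by_cases hsub : x - g ∈ S
      · exact Or.inr ⟨x + g, hS x hx hsub, add_sub_cancel_right x g⟩
      · exact Or.inl (Or.inl ⟨x - g, hsub, sub_add_cancel x g⟩)
    · exact Or.inl (Or.inr hx)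
  calc Fintype.card α = #(univ : Finset α) := card_univ.symm
    _ ≤ #(Sᶜ.image (· + g) ∪ Sᶜ ∪ Sᶜ.image (· - g)) := card_le_card hcover
    _ ≤ #Sᶜ + #Sᶜ + #Sᶜ :=
      (card_union_le _ _).trans <|
        add_le_add ((card_union_le _ _).trans (add_le_add_left card_image_le _)) card_image_le
    _ = 3 * #Sᶜ := by ring

theorem Fin.ncard_le_of_forall_sub_one_mem {n : ℕ} {S : Set (Fin (n + 1))}
    (hS : ∀ x ∈ S, x - 1 ∈ S → x + 1 ∉ S) : S.ncard ≤ n - n / 3 := by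
  classical
  have hcompl := card_le_three_mul_card_compl 1 (S := S.toFinset) (by simpa using hS)
  have hsum := S.toFinset.card_add_card_compl
  rw [Fintype.card_fin] at hcompl hsum
  rw [Set.ncard_eq_toFinset_card']
  omega

theorem card_filter_range_mod_three_ne_zero (N : ℕ) :
    #{i ∈ range N | i % 3 ≠ 0} = N - (N + 2) / 3 := by
  induction N with
  | zero => rfl
  | succ N ih =>
    rw [range_add_one, filter_insert]
    by_cases hN : N % 3 = 0
    · rw [if_neg (not_not.2 hN)]
      omega
    · rw [if_pos hN, card_insert_of_notMem (by simp)]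
      omega

theorem Fin.ncard_setOf_val_mod_three_ne_zero (N : ℕ) :
    {x : Fin N | x.val % 3 ≠ 0}.ncard = N - (N + 2) / 3 := by
  rw [Set.ncard_eq_toFinset_card', Set.toFinset_ofPred, card_filter,
    Fin.sum_univ_eq_sum_range (fun i => if i % 3 ≠ 0 then 1 else 0), ← card_filter,
    card_filter_range_mod_three_ne_zero]

theorem Fin.val_add_one_mod_three_eq_zero {n : ℕ} {x : Fin (n + 1)} (hx : x.val % 3 ≠ 0)
    (hsub : (x - 1).val % 3 ≠ 0) : (x + 1).val % 3 = 0 := by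
  have hx0 : x ≠ 0 := by
    rintro rfl
    exact hx rfl
  rw [Fin.val_sub_one_of_ne_zero hx0] at hsub
  by_cases hlast : x.val + 1 < n + 1
  · rw [Fin.val_add_one_of_lt' hlast]
    omega
  · rw [show x = Fin.last n from Fin.ext (by rw [Fin.val_last]; omega), Fin.last_add_one]
    rfl

theorem betaC_cycleGraph (n : ℕ) (hn : 4 ≤ n) :
    betaC (SimpleGraph.cycleGraph n) = 2 * ((n - 1) / 3) + (n - 1) % 3 := by
  obtain ⟨m, rfl⟩ : ∃ m, n = m + 4 := ⟨n - 4, by omega⟩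
  rw [show 2 * ((m + 4 - 1) / 3) + (m + 4 - 1) % 3 = m + 3 - (m + 3) / 3 by omega]
  refine IsGreatest.csSup_eq ⟨⟨{x | x.val % 3 ≠ 0}, ?_, ?_⟩, ?_⟩
  · exact convIndep_cycleGraph_iff.2 fun x hx hsub hadd =>
      hadd (Fin.val_add_one_mod_three_eq_zero hx hsub)
  · rw [Fin.ncard_setOf_val_mod_three_ne_zero]
    omega
  · rintro k ⟨S, hS, rfl⟩
    exact Fin.ncard_le_of_forall_sub_one_mem (convIndep_cycleGraph_iff.1 hS)
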